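/- arXiv:2201.03379 — 6 statements merged into one kernel-verified Lean document; each statement's English description precedes it below -/
import Mathlib

section
/- Let X be a normed space, let ψ be a norm-one functional on X attaining its norm at a point x of the unit sphere, and for δ > 0 let S(x,ψ,δ) = {y in the closed unit ball of X : ψ(y) > 1 − δ}. Then for all δ > 0 and ε > 0, one has diam(S(x,ψ,δ+ε)) ≤ (1 + ε/δ)·diam(S(x,ψ,δ)). -/
/-!
Contract the slice `S(x, ψ, δ + ε)` towards the point `x` by the homothety of ratio
`t = δ / (δ + ε)`. By convexity of the unit ball it stays in the ball, and since `ψ x = 1`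
the defect `1 - ψ y` is multiplied by `t`, so the image lies in `S(x, ψ, δ)`. A homothety of
ratio `t` scales distances by `t`, whence `diam S(x, ψ, δ + ε) ≤ t⁻¹ · diam S(x, ψ, δ)`,
and `t⁻¹ = 1 + ε / δ`.
-/

open Metric Set AffineMap

theorem dist_homothety_homothety {𝕜 V P : Type*} [NormedField 𝕜] [SeminormedAddCommGroup V]
    [NormedSpace 𝕜 V] [PseudoMetricSpace P] [NormedAddTorsor V P] (c p q : P) (r : 𝕜) :
    dist (homothety c r p) (homothety c r q) = ‖r‖ * dist p q := by
  rw [homothety_apply, homothety_apply, dist_vadd_cancel_right, dist_smul₀,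
    dist_vsub_cancel_right]

theorem diam_le_inv_mul_of_mapsTo_homothety {𝕜 V P : Type*} [NormedField 𝕜]
    [SeminormedAddCommGroup V] [NormedSpace 𝕜 V] [PseudoMetricSpace P] [NormedAddTorsor V P]
    {s t : Set P} (ht : Bornology.IsBounded t) {c : P} {r : 𝕜} (hr : r ≠ 0)
    (h : MapsTo (homothety c r) s t) : diam s ≤ ‖r‖⁻¹ * diam t := by
  refine diam_le_of_forall_dist_le (by positivity) fun p hp q hq => ?_
  have hr' : 0 < ‖r‖ := norm_pos_iff.mpr hr
  rw [le_inv_mul_iff₀ hr', ← dist_homothety_homothety c p q r]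
  exact dist_le_diam_of_mem ht (h hp) (h hq)

theorem mapsTo_homothety_slice {E F : Type*} [AddCommGroup E] [Module ℝ E] [FunLike F E ℝ]
    [LinearMapClass F ℝ E ℝ] {s : Set E} (hs : Convex ℝ s) {x : E} (hx : x ∈ s) (ψ : F)
    {t : ℝ} (ht₀ : 0 < t) (ht₁ : t ≤ 1) (r : ℝ) :
    MapsTo (homothety x t) {y ∈ s | ψ x - r < ψ y} {y ∈ s | ψ x - t * r < ψ y} := by
  rintro y ⟨hys, hψy⟩
  refine ⟨?_, ?_⟩
  · rw [homothety_eq_lineMap]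
    exact hs.lineMap_mem hx hys ⟨ht₀.le, ht₁⟩
  · have hψ : ψ (homothety x t y) = ψ x + t * (ψ y - ψ x) := by
      simp only [homothety_apply, vsub_eq_sub, vadd_eq_add, map_add, map_smul, map_sub,
        smul_eq_mul]
      ring
    rw [hψ]
    nlinarith

theorem slice_diam_scaling_general {X : Type*} [NormedAddCommGroup X] [NormedSpace ℝ X]
    (ψ : X →L[ℝ] ℝ) (x : X) (hx : ‖x‖ = 1) (hψx : ψ x = 1)
    (δ ε : ℝ) (hδ : 0 < δ) (hε : 0 < ε) :
    Metric.diam {y : X | ‖y‖ ≤ 1 ∧ 1 - (δ + ε) < ψ y} ≤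
      (1 + ε / δ) * Metric.diam {y : X | ‖y‖ ≤ 1 ∧ 1 - δ < ψ y} := by
  have slice_eq (η : ℝ) :
      {y : X | ‖y‖ ≤ 1 ∧ 1 - η < ψ y} = {y ∈ closedBall 0 1 | ψ x - η < ψ y} := by
    simp only [mem_closedBall_zero_iff, hψx]
  set t := δ / (δ + ε)
  have ht₀ : 0 < t := by positivity
  have ht₁ : t ≤ 1 := (div_le_one (by positivity)).mpr (by linarith)
  have hmaps := mapsTo_homothety_slice (convex_closedBall 0 1)
    (mem_closedBall_zero_iff.mpr hx.le) ψ ht₀ ht₁ (δ + ε)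
  rw [div_mul_cancel₀ δ (by positivity : δ + ε ≠ 0), ← slice_eq, ← slice_eq] at hmaps
  have hbdd : Bornology.IsBounded {y : X | ‖y‖ ≤ 1 ∧ 1 - δ < ψ y} :=
    isBounded_closedBall.subset fun y hy => mem_closedBall_zero_iff.mpr hy.1
  calc _ ≤ ‖t‖⁻¹ * _ := diam_le_inv_mul_of_mapsTo_homothety hbdd ht₀.ne' hmaps
    _ = (1 + ε / δ) * _ := by
      rw [Real.norm_of_nonneg ht₀.le, inv_div]
      field_simp

theorem slice_diam_scaling {X : Type*} [NormedAddCommGroup X] [NormedSpace ℝ X]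
    (ψ : X →L[ℝ] ℝ) (x : X) (hψ : ‖ψ‖ = 1) (hx : ‖x‖ = 1) (hψx : ψ x = 1)
    (δ ε : ℝ) (hδ : 0 < δ) (hε : 0 < ε) :
    Metric.diam {y : X | ‖y‖ ≤ 1 ∧ 1 - (δ + ε) < ψ y} ≤
      (1 + ε / δ) * Metric.diam {y : X | ‖y‖ ≤ 1 ∧ 1 - δ < ψ y} :=
  slice_diam_scaling_general ψ x hx hψx δ ε hδ hε
end

section
/- Let X be a normed space, let ψ be a norm-one functional attaining its norm at a point x of the unit sphere, and for δ > 0 let S(x,ψ,δ) = {y in the closed unit ball : ψ(y) > 1 − δ}. Then the map δ ↦ diam(S(x,ψ,δ)) is continuous on (0, ∞). -/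
open Metric Set

/-!
Pulling a point `w` of the slice of depth `b` towards `x` by the fraction `t = (b - a) / b`
lands in the slice of depth `a < b`, since `ψ (lineMap w x t) > (1 - t) (1 - b) + t = 1 - a`,
and moves `w` by at most `t * diam B`. Hence the diameter of the slices is monotone in the depth
and Lipschitz with constant `2 * diam B / c` on depths `≥ c > 0`.
-/

section

variable {X : Type*} [SeminormedAddCommGroup X] [NormedSpace ℝ X]

def slice (B : Set X) (ψ : X →ₗ[ℝ] ℝ) (δ : ℝ) : Set X := {y ∈ B | 1 - δ < ψ y}

namespace slice

variable {B : Set X} {ψ : X →ₗ[ℝ] ℝ} {x : X}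

theorem mono : Monotone (slice B ψ) :=
  fun _ _ hab _ hy => ⟨hy.1, (sub_le_sub_left hab 1).trans_lt hy.2⟩

theorem isBounded (hbdd : Bornology.IsBounded B) (δ : ℝ) : Bornology.IsBounded (slice B ψ δ) :=
  hbdd.subset (sep_subset _ _)

theorem lineMap_mem (hconv : Convex ℝ B) (hxB : x ∈ B) (hψx : ψ x = 1) {t b : ℝ}
    (ht₀ : 0 ≤ t) (ht₁ : t < 1) {w : X} (hw : w ∈ slice B ψ b) :
    AffineMap.lineMap w x t ∈ slice B ψ ((1 - t) * b) := by
  refine ⟨hconv.lineMap_mem hw.1 hxB ⟨ht₀, ht₁.le⟩, ?_⟩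
  have hψw : (1 - t) * (1 - b) < (1 - t) * ψ w := mul_lt_mul_of_pos_left hw.2 (by linarith)
  simp only [AffineMap.lineMap_apply_module, map_add, map_smul, hψx, smul_eq_mul]
  linarith

theorem diam_le_diam_add (hconv : Convex ℝ B) (hbdd : Bornology.IsBounded B) (hxB : x ∈ B)
    (hψx : ψ x = 1) {a b : ℝ} (ha : 0 < a) (hab : a ≤ b) :
    diam (slice B ψ b) ≤ diam (slice B ψ a) + 2 * ((b - a) / b) * diam B := by
  have hb : 0 < b := ha.trans_le hab
  set t := (b - a) / b
  have ht₀ : 0 ≤ t := div_nonneg (by linarith) hb.le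
  have ht₁ : t < 1 := (div_lt_one hb).2 (by linarith)
  have hdepth : (1 - t) * b = a := by simp only [t]; field_simp; ring
  have hmove : ∀ w ∈ slice B ψ b, dist w (AffineMap.lineMap w x t) ≤ t * diam B := by
    intro w hw
    rw [dist_left_lineMap, Real.norm_of_nonneg ht₀]
    exact mul_le_mul_of_nonneg_left (dist_le_diam_of_mem hbdd hw.1 hxB) ht₀
  refine diam_le_of_forall_dist_le (by positivity) fun y hy z hz => ?_
  have hyz := dist_le_diam_of_mem (isBounded hbdd a)
    (hdepth ▸ lineMap_mem hconv hxB hψx ht₀ ht₁ hy)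
    (hdepth ▸ lineMap_mem hconv hxB hψx ht₀ ht₁ hz)
  calc dist y z ≤ dist y (AffineMap.lineMap y x t)
        + dist (AffineMap.lineMap y x t) (AffineMap.lineMap z x t)
        + dist (AffineMap.lineMap z x t) z := dist_triangle4 _ _ _ _
    _ ≤ t * diam B + diam (slice B ψ a) + t * diam B := by
        gcongr
        · exact hmove y hy
        · exact dist_comm z _ ▸ hmove z hz
    _ = diam (slice B ψ a) + 2 * t * diam B := by ring

theorem lipschitzOnWith_diam (hconv : Convex ℝ B) (hbdd : Bornology.IsBounded B) (hxB : x ∈ B)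
    (hψx : ψ x = 1) {c : ℝ} (hc : 0 < c) :
    LipschitzOnWith (2 * diam B / c).toNNReal (fun δ => diam (slice B ψ δ)) (Ici c) := by
  refine LipschitzOnWith.of_le_add_mul' _ fun b hb a ha => ?_
  rcases le_total a b with hab | hba
  · have hbound : 2 * ((b - a) / b) * diam B ≤ 2 * diam B / c * dist b a := by
      rw [Real.dist_eq, abs_of_nonneg (sub_nonneg.2 hab)]
      have hfrac : (b - a) / b ≤ (b - a) / c :=
        div_le_div_of_nonneg_left (sub_nonneg.2 hab) hc (hb : c ≤ b)
      calc 2 * ((b - a) / b) * diam B ≤ 2 * ((b - a) / c) * diam B := by gcongr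
        _ = 2 * diam B / c * (b - a) := by ring
    linarith [diam_le_diam_add hconv hbdd hxB hψx (hc.trans_le ha) hab]
  · have hle := diam_mono (mono (ψ := ψ) hba) (isBounded hbdd a)
    have hnonneg : 0 ≤ 2 * diam B / c * dist b a := by positivity
    linarith

theorem continuousOn_diam (hconv : Convex ℝ B) (hbdd : Bornology.IsBounded B) (hxB : x ∈ B)
    (hψx : ψ x = 1) : ContinuousOn (fun δ => diam (slice B ψ δ)) (Ioi 0) := fun _ hδ =>
  ((lipschitzOnWith_diam hconv hbdd hxB hψx (half_pos hδ)).continuousOn.continuousAt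
    (Ici_mem_nhds (half_lt_self hδ))).continuousWithinAt

end slice

end

theorem slice_diam_continuous_general {X : Type*} [NormedAddCommGroup X] [NormedSpace ℝ X]
    (ψ : X →L[ℝ] ℝ) (x : X) (hx : ‖x‖ = 1) (hψx : ψ x = 1) :
    ContinuousOn (fun δ : ℝ => Metric.diam {y : X | ‖y‖ ≤ 1 ∧ 1 - δ < ψ y})
      (Set.Ioi (0 : ℝ)) := by
  have hxB : x ∈ closedBall (0 : X) 1 := mem_closedBall_zero_iff.2 hx.le
  convert slice.continuousOn_diam (convex_closedBall 0 1) isBounded_closedBall hxB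
    (ψ := ψ) hψx using 3
  ext y
  simp [slice]

theorem slice_diam_continuous {X : Type*} [NormedAddCommGroup X] [NormedSpace ℝ X]
    (ψ : X →L[ℝ] ℝ) (x : X) (hψ : ‖ψ‖ = 1) (hx : ‖x‖ = 1) (hψx : ψ x = 1) :
    ContinuousOn (fun δ : ℝ => Metric.diam {y : X | ‖y‖ ≤ 1 ∧ 1 - δ < ψ y})
      (Set.Ioi (0 : ℝ)) :=
  slice_diam_continuous_general ψ x hx hψx
end

section
/- Let X be a normed space with a biorthogonal system {e_α; φ_α}_{α∈Γ} such that ‖e_α‖ = 1 and ‖φ_α‖ ≤ M for all α. Let α_1,…,α_n and β_1,…,β_m be indices in Γ (with the α's pairwise distinct and the β's pairwise distinct) such that {α_1,…,α_n} ∩ {β_1,…,β_m} = ∅. Set F = span{e_{α_1},…,e_{α_n}} and G = span{e_{β_1},…,e_{β_m}}. Then for every x ∈ F with ‖x‖ = 1, dist(x, G) ≥ 1/(nM). -/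
/-!
A vector `x` of `F` is recovered from its coefficients as `x = ∑ φ_{α_i}(x) e_{α_i}`, so
`‖x‖ ≤ ∑ |φ_{α_i}(x)|`. Each `φ_{α_i}` vanishes on `G` by disjointness, hence for `y ∈ G`
`|φ_{α_i}(x)| = |φ_{α_i}(x - y)| ≤ M ‖x - y‖`, and `1 = ‖x‖ ≤ n M ‖x - y‖`.
-/

open Metric Set

section Biorthogonal

variable {X : Type*} [NormedAddCommGroup X] [NormedSpace ℝ X] {Γ : Type*} [DecidableEq Γ]
  {e : Γ → X} {φ : Γ → X →L[ℝ] ℝ}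

theorem sum_biorthogonal_smul_eq_of_mem_span
    (hbi : ∀ α β, φ α (e β) = if α = β then 1 else 0) (s : Finset Γ) {x : X}
    (hx : x ∈ Submodule.span ℝ (e '' s)) : ∑ γ ∈ s, φ γ x • e γ = x := by
  let P : X →ₗ[ℝ] X := ∑ γ ∈ s, (φ γ : X →ₗ[ℝ] ℝ).smulRight (e γ)
  have hP : ∀ z, P z = ∑ γ ∈ s, φ γ z • e γ := fun z => by simp [P]
  rw [← hP]
  refine LinearMap.eqOn_span (g := LinearMap.id) ?_ hx
  rintro _ ⟨β, hβ, rfl⟩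
  simp [hP, hbi, ite_smul, Finset.sum_ite_eq', Finset.mem_coe.mp hβ]

theorem norm_le_sum_abs_biorthogonal_of_mem_span
    (hbi : ∀ α β, φ α (e β) = if α = β then 1 else 0) (he : ∀ α, ‖e α‖ ≤ 1)
    (s : Finset Γ) {x : X} (hx : x ∈ Submodule.span ℝ (e '' s)) :
    ‖x‖ ≤ ∑ γ ∈ s, |φ γ x| :=
  calc ‖x‖ = ‖∑ γ ∈ s, φ γ x • e γ‖ := by rw [sum_biorthogonal_smul_eq_of_mem_span hbi s hx]
    _ ≤ ∑ γ ∈ s, ‖φ γ x • e γ‖ := norm_sum_le _ _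
    _ ≤ ∑ γ ∈ s, |φ γ x| := Finset.sum_le_sum fun γ _ => by
      rw [norm_smul, Real.norm_eq_abs]
      exact mul_le_of_le_one_right (abs_nonneg _) (he γ)

theorem biorthogonal_apply_eq_zero_of_mem_span
    (hbi : ∀ α β, φ α (e β) = if α = β then 1 else 0) {γ : Γ} {t : Set Γ} (hγ : γ ∉ t)
    {y : X} (hy : y ∈ Submodule.span ℝ (e '' t)) : φ γ y = 0 := by
  have hle : Submodule.span ℝ (e '' t) ≤ LinearMap.ker (φ γ : X →ₗ[ℝ] ℝ) := by
    rw [Submodule.span_le]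
    rintro _ ⟨β, hβ, rfl⟩
    simp [hbi, show γ ≠ β from fun h => hγ (h ▸ hβ)]
  exact hle hy

theorem norm_le_card_mul_norm_sub_of_mem_span
    (hbi : ∀ α β, φ α (e β) = if α = β then 1 else 0) (he : ∀ α, ‖e α‖ ≤ 1)
    {M : ℝ} (hφ : ∀ α, ‖φ α‖ ≤ M) {ι κ : Type*} [Fintype ι] (a : ι → Γ) (b : κ → Γ)
    (hdisj : ∀ i j, a i ≠ b j) {x y : X} (hx : x ∈ Submodule.span ℝ (range (e ∘ a)))
    (hy : y ∈ Submodule.span ℝ (range (e ∘ b))) :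
    ‖x‖ ≤ Fintype.card ι * M * ‖x - y‖ := by
  rw [range_comp] at hx hy
  have hx' : x ∈ Submodule.span ℝ (e '' (Finset.univ.image a : Finset Γ)) := by
    simpa [Finset.coe_image] using hx
  have hvanish : ∀ i, φ (a i) y = 0 := fun i =>
    biorthogonal_apply_eq_zero_of_mem_span hbi (by rintro ⟨j, hj⟩; exact hdisj i j hj.symm) hy
  calc ‖x‖ ≤ ∑ γ ∈ Finset.univ.image a, |φ γ x| :=
        norm_le_sum_abs_biorthogonal_of_mem_span hbi he _ hx'
    _ ≤ ∑ i, |φ (a i) x| := Finset.sum_image_le_of_nonneg fun _ _ => abs_nonneg _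
    _ = ∑ i, |φ (a i) (x - y)| := by simp only [map_sub, hvanish, sub_zero]
    _ ≤ ∑ _i : ι, M * ‖x - y‖ := Finset.sum_le_sum fun i _ =>
        ((φ (a i)).le_opNorm _).trans (mul_le_mul_of_nonneg_right (hφ _) (norm_nonneg _))
    _ = Fintype.card ι * M * ‖x - y‖ := by
        rw [Finset.sum_const, Finset.card_univ, nsmul_eq_mul, mul_assoc]

end Biorthogonal

theorem dist_to_disjoint_span_ge_general {X : Type*} [NormedAddCommGroup X] [NormedSpace ℝ X]
    {Γ : Type*} [DecidableEq Γ] (e : Γ → X) (φ : Γ → X →L[ℝ] ℝ) (M : ℝ)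
    (hbi : ∀ α β, φ α (e β) = if α = β then 1 else 0)
    (he : ∀ α, ‖e α‖ = 1) (hφ : ∀ α, ‖φ α‖ ≤ M)
    (n m : ℕ) (a : Fin n → Γ) (b : Fin m → Γ)
    (hdisj : ∀ i j, a i ≠ b j)
    (x : X) (hxF : x ∈ Submodule.span ℝ (Set.range (e ∘ a))) (hx : ‖x‖ = 1) :
    1 / (n * M) ≤ Metric.infDist x (Submodule.span ℝ (Set.range (e ∘ b)) : Set X) := by
  refine (le_infDist ⟨0, Submodule.zero_mem _⟩).2 fun y hy => ?_
  have key := norm_le_card_mul_norm_sub_of_mem_span hbi (fun α => (he α).le) hφ a b hdisj hxF hy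
  rw [hx, Fintype.card_fin, ← dist_eq_norm] at key
  have hnM : 0 < (n : ℝ) * M := pos_of_mul_pos_left (one_pos.trans_le key) dist_nonneg
  rw [div_le_iff₀ hnM]
  linarith

theorem dist_to_disjoint_span_ge {X : Type*} [NormedAddCommGroup X] [NormedSpace ℝ X]
    {Γ : Type*} [DecidableEq Γ] (e : Γ → X) (φ : Γ → X →L[ℝ] ℝ) (M : ℝ) (hM : 1 ≤ M)
    (hbi : ∀ α β, φ α (e β) = if α = β then 1 else 0)
    (he : ∀ α, ‖e α‖ = 1) (hφ : ∀ α, ‖φ α‖ ≤ M)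
    (n m : ℕ) (a : Fin n → Γ) (b : Fin m → Γ)
    (ha : Function.Injective a) (hb : Function.Injective b)
    (hdisj : ∀ i j, a i ≠ b j)
    (x : X) (hxF : x ∈ Submodule.span ℝ (Set.range (e ∘ a))) (hx : ‖x‖ = 1) :
    1 / (n * M) ≤ Metric.infDist x (Submodule.span ℝ (Set.range (e ∘ b)) : Set X) :=
  dist_to_disjoint_span_ge_general e φ M hbi he hφ n m a b hdisj x hxF hx
end

section
/- Let X be a normed space with a biorthogonal system {e_α; φ_α}_{α∈Γ} such that ‖e_α‖ = 1 and ‖φ_α‖ ≤ M for all α. Let α_1,…,α_n and β_1,…,β_m be indices in Γ (each list with pairwise distinct entries), and set F = span{e_{α_1},…,e_{α_n}}, G = span{e_{β_1},…,e_{β_m}}. Then for every x ∈ F, dist(x, F ∩ G) ≤ nM·dist(x, G). -/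
open Metric Set

theorem dist_to_inter_span_le {X : Type*} [NormedAddCommGroup X] [NormedSpace ℝ X]
    {Γ : Type*} [DecidableEq Γ] (e : Γ → X) (φ : Γ → X →L[ℝ] ℝ) (M : ℝ) (hM : 1 ≤ M)
    (hbi : ∀ α β, φ α (e β) = if α = β then 1 else 0)
    (he : ∀ α, ‖e α‖ = 1) (hφ : ∀ α, ‖φ α‖ ≤ M)
    (n m : ℕ) (a : Fin n → Γ) (b : Fin m → Γ)
    (ha : Function.Injective a) (hb : Function.Injective b)
    (x : X) (hxF : x ∈ Submodule.span ℝ (Set.range (e ∘ a))) :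
    Metric.infDist x
        ((Submodule.span ℝ (Set.range (e ∘ a)) ⊓ Submodule.span ℝ (Set.range (e ∘ b)) :
          Submodule ℝ X) : Set X) ≤
      n * M * Metric.infDist x (Submodule.span ℝ (Set.range (e ∘ b)) : Set X) := by
  classical
  set F := Submodule.span ℝ (Set.range (e ∘ a)) with hF
  set G := Submodule.span ℝ (Set.range (e ∘ b)) with hG
  -- representation of elements of F
  have hrepr : ∀ y, y ∈ F → y = ∑ i : Fin n, φ (a i) y • e (a i) := by
    intro y hy
    induction hy using Submodule.span_induction with
    | mem z hz =>
      obtain ⟨i, rfl⟩ := hz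
      simp only [Function.comp_apply, hbi, ha.eq_iff]
      rw [Finset.sum_eq_single i]
      · simp
      · intro j _ hji
        simp [hji]
      · simp
    | zero => simp
    | add y z hy hz ihy ihz =>
      simp only [map_add, add_smul, Finset.sum_add_distrib]
      rw [← ihy, ← ihz]
    | smul c y hy ih =>
      simp only [map_smul, smul_eq_mul, mul_smul, ← Finset.smul_sum, ← ih]
  -- functionals vanish on G
  have hker : ∀ i : Fin n, a i ∉ Set.range b → ∀ y ∈ G, φ (a i) y = 0 := by
    intro i hi y hy
    induction hy using Submodule.span_induction with
    | mem z hz =>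
      obtain ⟨j, rfl⟩ := hz
      have hne : a i ≠ b j := fun h => hi ⟨j, h.symm⟩
      simp [hbi, hne]
    | zero => simp
    | add y z _ _ ihy ihz => simp [ihy, ihz]
    | smul c y _ ih => simp [ih]
  set S : Finset (Fin n) := Finset.univ.filter (fun i => a i ∈ Set.range b) with hS
  set z : X := ∑ i ∈ S, φ (a i) x • e (a i) with hz
  have hzF : z ∈ F := by
    apply Submodule.sum_mem
    intro i _
    exact Submodule.smul_mem _ _ (Submodule.subset_span ⟨i, rfl⟩)
  have hzG : z ∈ G := by
    apply Submodule.sum_mem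
    intro i hi
    obtain ⟨j, hj⟩ : a i ∈ Set.range b := by simpa [hS] using hi
    apply Submodule.smul_mem
    apply Submodule.subset_span
    exact ⟨j, by simp [hj]⟩
  have hzmem : z ∈ (F ⊓ G : Submodule ℝ X) := ⟨hzF, hzG⟩
  have hxz : x - z = ∑ i ∈ Sᶜ, φ (a i) x • e (a i) := by
    conv_lhs => rw [hrepr x hxF]
    rw [← Finset.sum_add_sum_compl S (fun i => φ (a i) x • e (a i)), hz]
    abel
  have key : ∀ y ∈ G, Metric.infDist x ((F ⊓ G : Submodule ℝ X) : Set X)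
      ≤ n * M * dist x y := by
    intro y hy
    have h1 : Metric.infDist x ((F ⊓ G : Submodule ℝ X) : Set X) ≤ dist x z :=
      Metric.infDist_le_dist_of_mem hzmem
    have h2 : dist x z ≤ n * M * dist x y := by
      rw [dist_eq_norm, dist_eq_norm, hxz]
      have heq : ∀ i ∈ Sᶜ, φ (a i) x • e (a i) = φ (a i) (x - y) • e (a i) := by
        intro i hi
        have hi' : a i ∉ Set.range b := by simpa [hS] using hi
        rw [map_sub, hker i hi' y hy, sub_zero]
      rw [Finset.sum_congr rfl heq]
      calc ‖∑ i ∈ Sᶜ, φ (a i) (x - y) • e (a i)‖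
          ≤ ∑ i ∈ Sᶜ, ‖φ (a i) (x - y) • e (a i)‖ := norm_sum_le _ _
        _ ≤ ∑ _i ∈ Sᶜ, M * ‖x - y‖ := by
            apply Finset.sum_le_sum
            intro i _
            rw [norm_smul, he, mul_one]
            calc ‖φ (a i) (x - y)‖ ≤ ‖φ (a i)‖ * ‖x - y‖ := (φ (a i)).le_opNorm _
              _ ≤ M * ‖x - y‖ :=
                  mul_le_mul_of_nonneg_right (hφ _) (norm_nonneg _)
        _ = (Sᶜ.card : ℝ) * (M * ‖x - y‖) := by rw [Finset.sum_const, nsmul_eq_mul]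
        _ ≤ (n : ℝ) * (M * ‖x - y‖) := by
            apply mul_le_mul_of_nonneg_right _ (by positivity)
            exact_mod_cast (Finset.card_le_univ Sᶜ).trans_eq (Finset.card_fin n)
        _ = n * M * ‖x - y‖ := by ring
    exact h1.trans h2
  have hGne : ((G : Submodule ℝ X) : Set X).Nonempty := ⟨0, G.zero_mem⟩
  have hc : (0 : ℝ) ≤ (n : ℝ) * M := by positivity
  rcases eq_or_lt_of_le hc with hc0 | hc0
  · calc Metric.infDist x ((F ⊓ G : Submodule ℝ X) : Set X)
        ≤ (n : ℝ) * M * dist x 0 := key 0 G.zero_mem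
      _ = 0 := by rw [← hc0, zero_mul]
      _ ≤ (n : ℝ) * M * Metric.infDist x (G : Set X) := by
          rw [← hc0, zero_mul]
  · rw [← div_le_iff₀' hc0]
    by_contra hlt
    push_neg at hlt
    obtain ⟨y, hy, hdy⟩ := (Metric.infDist_lt_iff hGne).1 hlt
    have h1 := key y hy
    have h2 := (lt_div_iff₀' hc0).1 hdy
    linarith
end

section
/- Let D be a bounded, symmetric, convex body in a normed space X (i.e., a bounded convex set with nonempty interior with D = −D). Suppose that for every x in the boundary of D there exist a neighbourhood U of x and finitely many functionals φ_1,…,φ_n ∈ X* such that for every y ∈ U, y ∈ D if and only if φ_i(y) ≤ 1 for all i = 1,…,n. Then the Minkowski functional μ_D of D is an equivalent norm on X that locally depends on finitely many coordinates (LFC). -/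
open Metric Set Filter

theorem gauge_lfc_of_local_polyhedral {X : Type*} [NormedAddCommGroup X] [NormedSpace ℝ X]
    (D : Set X) (hbdd : Bornology.IsBounded D) (hconv : Convex ℝ D)
    (hsymm : D = -D) (h0 : (0 : X) ∈ interior D)
    (hLFCb : ∀ x ∈ frontier D, ∃ U ∈ nhds x, ∃ n : ℕ, ∃ φ : Fin n → X →L[ℝ] ℝ,
      ∀ y ∈ U, (y ∈ D ↔ ∀ i, φ i y ≤ 1)) :
    (∃ c C : ℝ, 0 < c ∧ 0 < C ∧ ∀ x : X, c * ‖x‖ ≤ gauge D x ∧ gauge D x ≤ C * ‖x‖) ∧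
    (∀ x : X, gauge D x = 1 → ∃ U ∈ nhds x, ∃ k : ℕ, ∃ φ : Fin k → X →L[ℝ] ℝ,
      ∀ y ∈ U, ∀ z ∈ U, (∀ j, φ j y = φ j z) → gauge D y = gauge D z) := by
  have hnhds : D ∈ nhds 0 := mem_interior_iff_mem_nhds.mp h0
  have habs : Absorbent ℝ D := absorbent_nhds_zero hnhds
  constructor
  · obtain ⟨r, hr0, hrD⟩ := Metric.mem_nhds_iff.1 hnhds
    obtain ⟨R, hR0, hRD⟩ := hbdd.subset_closedBall_lt 0 0
    refine ⟨R⁻¹, r⁻¹, by positivity, by positivity, fun y => ⟨?_, ?_⟩⟩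
    · rw [inv_mul_eq_div]
      exact le_gauge_of_subset_closedBall habs hR0.le hRD
    · have h := mul_gauge_le_norm (x := y) hrD
      rw [inv_mul_eq_div, le_div_iff₀ hr0, mul_comm]
      exact h
  · intro x hx1
    have hxf : x ∈ frontier D :=
      mem_frontier_of_gauge_eq_one hconv (mem_of_mem_nhds hnhds) habs hx1
    obtain ⟨U0, hU0, n, φ, hφ0⟩ := hLFCb x hxf
    set V := interior U0 with hVdef
    have hVo : IsOpen V := isOpen_interior
    have hxV : x ∈ V := mem_interior_iff_mem_nhds.2 hU0
    have hφ : ∀ y ∈ V, (y ∈ D ↔ ∀ i, φ i y ≤ 1) := fun y hy => hφ0 y (interior_subset hy)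
    have hn : 0 < n := by
      rcases Nat.eq_zero_or_pos n with h | h
      · exfalso
        subst h
        have hVD : V ⊆ D := fun y hy => (hφ y hy).2 fun i => i.elim0
        exact hxf.2 (interior_maximal hVD hVo hxV)
      · exact h
    have : Nonempty (Fin n) := ⟨⟨0, hn⟩⟩
    have hne : (Finset.univ : Finset (Fin n)).Nonempty := Finset.univ_nonempty
    -- Sublemma: points of V with gauge ≤ 1 satisfy all constraints
    have hA : ∀ z ∈ V, gauge D z ≤ 1 → ∀ i, φ i z ≤ 1 := by
      intro z hz hgz i
      have htend : Tendsto (fun t : ℝ => t⁻¹ • z) (nhdsWithin 1 (Set.Ioi 1)) (nhds z) := by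
        have hc : ContinuousAt (fun t : ℝ => t⁻¹ • z) 1 :=
          (continuousAt_inv₀ one_ne_zero).smul continuousAt_const
        have : Tendsto (fun t : ℝ => t⁻¹ • z) (nhds 1) (nhds z) := by
          have h' := hc.tendsto
          rwa [inv_one, one_smul] at h'
        exact this.mono_left nhdsWithin_le_nhds
      have hev : ∀ᶠ t in nhdsWithin 1 (Set.Ioi 1), φ i z ≤ t := by
        filter_upwards [htend.eventually_mem (hVo.mem_nhds hz), self_mem_nhdsWithin]
          with t htV ht1
        have ht1' : (1 : ℝ) < t := ht1
        have ht0 : (0 : ℝ) < t := lt_trans one_pos ht1'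
        have hmem : t⁻¹ • z ∈ D := by
          have hlt : gauge D (t⁻¹ • z) < 1 := by
            rw [gauge_smul_of_nonneg (by positivity : (0:ℝ) ≤ t⁻¹), smul_eq_mul]
            calc t⁻¹ * gauge D z ≤ t⁻¹ * 1 :=
                  mul_le_mul_of_nonneg_left hgz (by positivity)
              _ = t⁻¹ := mul_one _
              _ < 1 := inv_lt_one_of_one_lt₀ ht1'
          exact interior_subset ((gauge_lt_one_iff_mem_interior hconv hnhds).1 hlt)
        have h1 := (hφ _ htV).1 hmem i
        rw [map_smul, smul_eq_mul] at h1
        calc φ i z = t * (t⁻¹ * φ i z) := by field_simp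
          _ ≤ t * 1 := mul_le_mul_of_nonneg_left h1 ht0.le
          _ = t := mul_one t
      exact ge_of_tendsto (tendsto_id.mono_left nhdsWithin_le_nhds) hev
    have hContg : ContinuousAt (gauge D) x := continuousAt_gauge hconv hnhds
    set W := (V ∩ {y | (gauge D y)⁻¹ • y ∈ V}) ∩ {y | 0 < gauge D y} with hWdef
    have hWnhds : W ∈ nhds x := by
      refine inter_mem (inter_mem (hVo.mem_nhds hxV) ?_) ?_
      · have hf : ContinuousAt (fun y => (gauge D y)⁻¹ • y) x :=
          (hContg.inv₀ (by rw [hx1]; norm_num)).smul continuousAt_id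
        have hfx : (gauge D x)⁻¹ • x ∈ V := by rw [hx1]; simpa using hxV
        exact hf.preimage_mem_nhds (hVo.mem_nhds hfx)
      · have : {y | 0 < gauge D y} = gauge D ⁻¹' Set.Ioi 0 := rfl
        rw [this]
        exact hContg.preimage_mem_nhds (Ioi_mem_nhds (by rw [hx1]; norm_num))
    have key : ∀ y ∈ W, gauge D y = Finset.univ.sup' hne fun i => φ i y := by
      intro y hy
      obtain ⟨⟨hyV, hyVf⟩, hyg⟩ := hy
      have hyg : 0 < gauge D y := hyg
      set g := gauge D y with hg
      have hzV : g⁻¹ • y ∈ V := hyVf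
      have hgz1 : gauge D (g⁻¹ • y) ≤ 1 := by
        rw [gauge_smul_of_nonneg (by positivity : (0:ℝ) ≤ g⁻¹), smul_eq_mul, ← hg,
          inv_mul_cancel₀ hyg.ne']
      have hup : ∀ i, φ i y ≤ g := by
        intro i
        have h1 := hA _ hzV hgz1 i
        rw [map_smul, smul_eq_mul] at h1
        calc φ i y = g * (g⁻¹ * φ i y) := by field_simp
          _ ≤ g * 1 := mul_le_mul_of_nonneg_left h1 hyg.le
          _ = g := mul_one g
      refine le_antisymm ?_ (Finset.sup'_le hne _ fun i _ => hup i)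
      by_contra hlt
      push_neg at hlt
      set M := Finset.univ.sup' hne fun i => φ i y with hM
      have hev : ∀ᶠ t in nhdsWithin g (Set.Iio g), t⁻¹ • y ∈ V ∧ max M 0 < t := by
        have h1 : ∀ᶠ t in nhds g, t⁻¹ • y ∈ V := by
          have hf : ContinuousAt (fun t : ℝ => t⁻¹ • y) g :=
            (continuousAt_inv₀ hyg.ne').smul continuousAt_const
          exact hf.eventually_mem (hVo.mem_nhds hzV)
        filter_upwards [nhdsWithin_le_nhds h1,
          Ioo_mem_nhdsLT (max_lt hlt hyg)] with t ht1 ht2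
        exact ⟨ht1, ht2.1⟩
      obtain ⟨t, ⟨htV, htM⟩, htg⟩ := (hev.and self_mem_nhdsWithin).exists
      have htg : t < g := htg
      have ht0 : (0 : ℝ) < t := lt_of_le_of_lt (le_max_right M 0) htM
      have htM' : M < t := lt_of_le_of_lt (le_max_left M 0) htM
      have htD : t⁻¹ • y ∈ D := by
        refine (hφ _ htV).2 fun i => ?_
        rw [map_smul, smul_eq_mul]
        have hiM : φ i y ≤ M := Finset.le_sup' (fun i => φ i y) (Finset.mem_univ i)
        have hi : φ i y ≤ t := le_of_lt (lt_of_le_of_lt hiM htM')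
        rw [inv_mul_le_iff₀ ht0, mul_one]
        exact hi
      have hle : g ≤ t :=
        gauge_le_of_mem ht0.le ((mem_smul_set_iff_inv_smul_mem₀ ht0.ne' _ _).2 htD)
      linarith
    refine ⟨W, hWnhds, n, φ, fun y hy z hz hyz => ?_⟩
    rw [key y hy, key z hz]
    exact Finset.sup'_congr hne rfl fun i _ => hyz i
end

section
/- Let Y be a normed space whose norm ‖·‖ is Fréchet differentiable on Y∖{0} with derivative g uniformly continuous on {y : ‖y‖ ≥ 1/2}, with modulus of continuity ω. Then for all y, h ∈ Y with ‖y‖ = ‖h‖ = 1 and all τ ∈ (0, 1/2), one has ‖y + τh‖ + ‖y − τh‖ − 2 ≤ ω(2τ)·τ. -/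
/-!
Along the line `t ↦ y + t • h` the norm has derivative `g (y + t • h) h`. The mean value theorem
on `[0, τ]` and on `[-τ, 0]` writes the second difference as `τ` times the difference of two such
derivatives at points at most `2τ` apart, all of norm at least `1/2`, which `ω (2τ)` controls.
-/

open Metric Set

theorem second_difference_le_of_deriv_sub_le {f f' : ℝ → ℝ} {τ M : ℝ} (hτ : 0 < τ)
    (hf : ∀ t ∈ Icc (-τ) τ, HasDerivAt f (f' t) t)
    (hM : ∀ s ∈ Ioo 0 τ, ∀ t ∈ Ioo (-τ) 0, f' s - f' t ≤ M) :
    f τ + f (-τ) - 2 * f 0 ≤ M * τ := by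
  have hcont : ContinuousOn f (Icc (-τ) τ) := fun t ht =>
    (hf t ht).continuousAt.continuousWithinAt
  have hright : Icc 0 τ ⊆ Icc (-τ) τ := Icc_subset_Icc (by linarith) le_rfl
  have hleft : Icc (-τ) 0 ⊆ Icc (-τ) τ := Icc_subset_Icc le_rfl hτ.le
  obtain ⟨s, hs, hs_slope⟩ := exists_hasDerivAt_eq_slope f f' hτ (hcont.mono hright)
    fun t ht => hf t (hright (Ioo_subset_Icc_self ht))
  obtain ⟨t, ht, ht_slope⟩ := exists_hasDerivAt_eq_slope f f' (neg_lt_zero.2 hτ)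
    (hcont.mono hleft) fun t ht => hf t (hleft (Ioo_subset_Icc_self ht))
  rw [sub_zero, eq_div_iff hτ.ne'] at hs_slope
  rw [zero_sub, neg_neg, eq_div_iff hτ.ne'] at ht_slope
  nlinarith [hM s hs t ht]

theorem HasFDerivAt.hasDerivAt_add_smul {E F : Type*} [NormedAddCommGroup E] [NormedSpace ℝ E]
    [NormedAddCommGroup F] [NormedSpace ℝ F] {f : E → F} {f' : E →L[ℝ] F} {x v : E} {t : ℝ}
    (hf : HasFDerivAt f f' (x + t • v)) :
    HasDerivAt (fun s : ℝ => f (x + s • v)) (f' v) t := by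
  have hline : HasDerivAt (fun s : ℝ => x + s • v) v t := by
    simpa using ((hasDerivAt_id t).smul_const v).const_add x
  exact hf.comp_hasDerivAt t hline

theorem half_le_norm_add_smul {Y : Type*} [NormedAddCommGroup Y] [NormedSpace ℝ Y] {y h : Y}
    {t : ℝ} (hy : ‖y‖ = 1) (hh : ‖h‖ = 1) (ht : |t| ≤ 1 / 2) :
    1 / 2 ≤ ‖y + t • h‖ := by
  have := norm_sub_le_norm_add y (t • h)
  rw [norm_smul, hy, hh, Real.norm_eq_abs, mul_one] at this
  linarith

theorem norm_second_difference_bound {Y : Type*} [NormedAddCommGroup Y] [NormedSpace ℝ Y]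
    (g : Y → Y →L[ℝ] ℝ) (ω : ℝ → ℝ)
    (hg : ∀ y : Y, y ≠ 0 → HasFDerivAt (fun z : Y => ‖z‖) (g y) y)
    (hω : Monotone ω)
    (hωg : ∀ u v : Y, 1 / 2 ≤ ‖u‖ → 1 / 2 ≤ ‖v‖ → ‖g u - g v‖ ≤ ω ‖u - v‖)
    (y h : Y) (hy : ‖y‖ = 1) (hh : ‖h‖ = 1) (τ : ℝ) (hτ : τ ∈ Set.Ioo (0 : ℝ) (1 / 2)) :
    ‖y + τ • h‖ + ‖y - τ • h‖ - 2 ≤ ω (2 * τ) * τ := by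
  obtain ⟨hτ0, hτ2⟩ := hτ
  have hnorm : ∀ t ∈ Icc (-τ) τ, 1 / 2 ≤ ‖y + t • h‖ := fun t ht =>
    half_le_norm_add_smul hy hh (abs_le.2 ⟨by linarith [ht.1], by linarith [ht.2]⟩)
  have hderiv : ∀ t ∈ Icc (-τ) τ,
      HasDerivAt (fun t : ℝ => ‖y + t • h‖) (g (y + t • h) h) t := fun t ht =>
    (hg _ (norm_pos_iff.1 (by linarith [hnorm t ht]))).hasDerivAt_add_smul
  have hderiv_sub : ∀ s ∈ Ioo 0 τ, ∀ t ∈ Ioo (-τ) 0,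
      g (y + s • h) h - g (y + t • h) h ≤ ω (2 * τ) := by
    intro s hs t ht
    have hdist : ‖(y + s • h) - (y + t • h)‖ ≤ 2 * τ := by
      rw [add_sub_add_left_eq_sub, ← sub_smul, norm_smul, hh, mul_one, Real.norm_eq_abs,
        abs_of_pos (by linarith [hs.1, ht.2])]
      linarith [hs.2, ht.1]
    calc g (y + s • h) h - g (y + t • h) h ≤ ‖g (y + s • h) - g (y + t • h)‖ := by
          simpa [hh] using (le_abs_self _).trans ((g (y + s • h) - g (y + t • h)).le_opNorm h)
      _ ≤ ω ‖(y + s • h) - (y + t • h)‖ :=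
          hωg _ _ (hnorm s ⟨by linarith [hs.1], hs.2.le⟩) (hnorm t ⟨ht.1.le, by linarith [ht.2]⟩)
      _ ≤ ω (2 * τ) := hω hdist
  simpa [hy, ← sub_eq_add_neg] using
    second_difference_le_of_deriv_sub_le hτ0 hderiv hderiv_sub
end
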